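/- Let λ be a regular uncountable cardinal. Suppose G*₁ ⊆ Q⁰_λ is directed with respect to ≤⁰ and fil(G*₁) is a weakly reasonable ultrafilter on λ. Then F₁ = {f_p : p ∈ G*₁} is a club-dominating family in ^λλ. In particular, |G*₁| ≥ 𝔡_{cl(λ)}. -/

import Mathlib

open Set Ordinal Cardinal

noncomputable section

namespace Sh830

/-- `D` is a (proper) ultrafilter on the set `Z` of ordinals. -/
def IsUltraOn (Z : Set Ordinal) (D : Set (Set Ordinal)) : Prop :=
  (∀ A ∈ D, A ⊆ Z) ∧ Z ∈ D ∧ ∅ ∉ D ∧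
  (∀ A B : Set Ordinal, A ∈ D → A ⊆ B → B ⊆ Z → B ∈ D) ∧
  (∀ A B : Set Ordinal, A ∈ D → B ∈ D → A ∩ B ∈ D) ∧
  (∀ A : Set Ordinal, A ⊆ Z → A ∈ D ∨ Z \ A ∈ D)

/-- `D` is an ultrafilter on `λ`, where `λ` is identified with the set of ordinals `< λ`. -/
def IsUltrafilterOn (l : Ordinal) (D : Set (Set Ordinal)) : Prop :=
  IsUltraOn (Iio l) D

/-- `D` is uniform: every member of `D` has cardinality `λ`. -/
def IsUniformOn (l : Ordinal) (D : Set (Set Ordinal)) : Prop :=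
  ∀ A ∈ D, #A = #(Iio l)

/-- `C` is a club (closed and unbounded) subset of `λ`. -/
def IsClubIn (C : Set Ordinal) (l : Ordinal) : Prop :=
  C ⊆ Iio l ∧
  (∀ δ, δ < l → δ ≠ 0 → sSup (C ∩ Iio δ) = δ → δ ∈ C) ∧
  (∀ α, α < l → ∃ β ∈ C, α < β)

/-- The quotient `D/f = {A ⊆ λ : f⁻¹(A) ∈ D}`. -/
def quotUF (l : Ordinal) (D : Set (Set Ordinal)) (f : Ordinal → Ordinal) :
    Set (Set Ordinal) :=
  {A | A ⊆ Iio l ∧ Iio l ∩ f ⁻¹' A ∈ D}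

/-- The family `F_λ` of all non-decreasing functions `λ → λ` with unbounded range. -/
def Flam (l : Ordinal) : Set (Ordinal → Ordinal) :=
  {f | (∀ α, α < l → f α < l) ∧ (∀ α β, α ≤ β → β < l → f α ≤ f β) ∧
    (∀ γ, γ < l → ∃ α, α < l ∧ γ ≤ f α)}

/-- `D` is weakly reasonable: for every `f ∈ F_λ` there is a club `C` of `λ` with
`∪ {[δ, δ + f δ) : δ ∈ C} ∉ D`. -/
def WeaklyReasonable (l : Ordinal) (D : Set (Set Ordinal)) : Prop :=
  ∀ f ∈ Flam l, ∃ C, IsClubIn C l ∧ (⋃ δ ∈ C, Ico δ (δ + f δ)) ∉ D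

/-- The order type of a set of ordinals: the (unique) ordinal order-isomorphic to it. -/
def setOtp (S : Set Ordinal) : Ordinal :=
  sInf {o : Ordinal | Nonempty (Iio o ≃o S)}

/-- `min(β/E)`: the least element of the `E`-equivalence class of `β`. -/
def minClass (E : Ordinal → Ordinal → Prop) (β : Ordinal) : Ordinal :=
  sInf {γ | E γ β}

/-- The function `f_E` associated with an equivalence relation `E`:
`f_E α = otp {β < α : β = min(β/E) < min(α/E)}`. -/
def fEquiv (E : Ordinal → Ordinal → Prop) (α : Ordinal) : Ordinal :=
  setOtp {β | β < α ∧ β = minClass E β ∧ minClass E β < minClass E α}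

/-- The equivalence relation `E_C` associated with a club `C`:
`α E_C β` iff `(∀ γ ∈ C)(α < γ ↔ β < γ)`. -/
def clubRel (C : Set Ordinal) (α β : Ordinal) : Prop :=
  ∀ γ ∈ C, (α < γ ↔ β < γ)

/-- The quotient `D/C = D/E_C = D/f_{E_C}`. -/
def quotClub (l : Ordinal) (D : Set (Set Ordinal)) (C : Set Ordinal) :
    Set (Set Ordinal) :=
  quotUF l D (fEquiv (clubRel C))

/-- A strategy for Odd in the game `⅁_D`: given `i < λ`, Even's moves `β_j = α_{2j}`
for `j ≤ i`, and Odd's previous moves `γ_j = α_{2j+1}` for `j < i`, it produces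
Odd's move `γ_i = α_{2i+1}`. -/
def OddStr : Type 1 :=
  (i : Ordinal) → ((j : Ordinal) → j ≤ i → Ordinal) → ((j : Ordinal) → j < i → Ordinal) → Ordinal

/-- A legal position of the game just before Odd's `i`-th move. -/
def IsPosition (l i : Ordinal) (β γ : Ordinal → Ordinal) : Prop :=
  i < l ∧ (∀ j, j ≤ i → β j < l) ∧ (∀ j, j < i → β j < γ j ∧ γ j < l) ∧
  (∀ j, j < i → γ j < β (j + 1)) ∧
  (∀ j, j ≤ i → Order.IsSuccLimit j → β j = sSup (γ '' Iio j))

/-- A complete legal play of the game of length `λ`: `β i` is `α_{2i}`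
(Even's move) and `γ i` is `α_{2i+1}` (Odd's move). -/
def IsPlay (l : Ordinal) (β γ : Ordinal → Ordinal) : Prop :=
  (∀ i, i < l → β i < l ∧ γ i < l) ∧ (∀ i, i < l → β i < γ i) ∧
  (∀ i, i + 1 < l → γ i < β (i + 1)) ∧
  (∀ i, i < l → Order.IsSuccLimit i → β i = sSup (γ '' Iio i))

/-- `st` is a legal strategy for Odd: at every legal position it produces a legal move,
i.e. an ordinal `α_{2i+1}` with `α_{2i} < α_{2i+1} < λ`. -/
def IsOddStrategy (l : Ordinal) (st : OddStr) : Prop :=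
  ∀ i β γ, IsPosition l i β γ →
    β i < st i (fun j _ => β j) (fun j _ => γ j) ∧
    st i (fun j _ => β j) (fun j _ => γ j) < l

/-- The play `(β, γ)` follows the strategy `st` of Odd. -/
def FollowsOdd (l : Ordinal) (st : OddStr) (β γ : Ordinal → Ordinal) : Prop :=
  ∀ i, i < l → γ i = st i (fun j _ => β j) (fun j _ => γ j)

/-- `st` is winning for Odd in `⅁_D`: in every play following it, Even loses, i.e.
`∪ {[α_{2i+1}, α_{2i+2}) : i < λ} ∉ D`. -/
def OddWinsWith (l : Ordinal) (D : Set (Set Ordinal)) (st : OddStr) : Prop :=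
  ∀ β γ, IsPlay l β γ → FollowsOdd l st β γ →
    (⋃ i ∈ Iio l, Ico (γ i) (β (i + 1))) ∉ D

/-- The next element of `C` above `δ`, i.e. `min (C \ (δ+1))`. -/
def nxt (C : Set Ordinal) (δ : Ordinal) : Ordinal := sInf (C ∩ Ioi δ)

/-- A condition of the forcing notion `Q¹_λ`; here `Z^p_δ = [δ, nxt C δ)` and
`d δ` is the ultrafilter `d^p_δ` on `Z^p_δ`. -/
structure Q1 (l : Ordinal) where
  γ : Ordinal
  C : Set Ordinal
  d : Ordinal → Set (Set Ordinal)
  γ_lt : γ < l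
  club : IsClubIn C l
  lim : ∀ δ ∈ C, Order.IsSuccLimit δ
  ultra : ∀ δ ∈ C, IsUltraOn (Ico δ (nxt C δ)) (d δ)

/-- The order of `Q¹_λ`. -/
def Q1le (l : Ordinal) (p q : Q1 l) : Prop :=
  p.γ ≤ q.γ ∧ p.C ∩ Iio p.γ ⊆ q.C ∧ q.C ⊆ p.C ∧
  ∀ δ ∈ q.C, ∀ A ∈ q.d δ,
    ∃ ζ ∈ p.C ∩ Ico δ (nxt q.C δ), A ∩ Ico ζ (nxt p.C ζ) ∈ p.d ζ

/-- A condition of the forcing notion `Q⁰_λ`; here `Z^p_δ = [δ, nxt C δ)` and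
`d δ` is the ultrafilter `d^p_δ` on `Z^p_δ`. -/
structure Q0 (l : Ordinal) where
  C : Set Ordinal
  d : Ordinal → Set (Set Ordinal)
  club : IsClubIn C l
  lim : ∀ δ ∈ C, Order.IsSuccLimit δ
  ultra : ∀ δ ∈ C, IsUltraOn (Ico δ (nxt C δ)) (d δ)

/-- The order relation of `Q⁰_λ`, on the underlying data. -/
def Q0leAux (Cp : Set Ordinal) (dp : Ordinal → Set (Set Ordinal))
    (Cq : Set Ordinal) (dq : Ordinal → Set (Set Ordinal)) : Prop :=
  Cq ⊆ Cp ∧ ∀ δ ∈ Cq, ∀ A ∈ dq δ,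
    ∃ ζ ∈ Cp ∩ Ico δ (nxt Cq δ), A ∩ Ico ζ (nxt Cp ζ) ∈ dp ζ

/-- The order `≤_{Q⁰_λ}`. -/
def Q0le (l : Ordinal) (p q : Q0 l) : Prop := Q0leAux p.C p.d q.C q.d

/-- The relation `≤*_{Q⁰_λ}`: for some `α < λ` the restrictions beyond `α` are
`≤_{Q⁰_λ}`-related. -/
def Q0leStar (l : Ordinal) (p q : Q0 l) : Prop :=
  ∃ α, α < l ∧ Q0leAux (p.C \ Iio α) p.d (q.C \ Iio α) q.d

/-- `fil(p) = {A ⊆ λ : (∃ ε < λ)(∀ δ ∈ C^p \ ε)(A ∩ Z^p_δ ∈ d^p_δ)}`. -/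
def fil (l : Ordinal) (p : Q0 l) : Set (Set Ordinal) :=
  {A | A ⊆ Iio l ∧ ∃ ε, ε < l ∧ ∀ δ ∈ p.C, ε ≤ δ → A ∩ Ico δ (nxt p.C δ) ∈ p.d δ}

/-- `fil(G*) = ∪ {fil(p) : p ∈ G*}`. -/
def filG (l : Ordinal) (G : Set (Q0 l)) : Set (Set Ordinal) := ⋃ p ∈ G, fil l p

/-- The relation `≤⁰`: `p ≤⁰ q` iff `fil(p) ⊆ fil(q)`. -/
def le0 (l : Ordinal) (p q : Q0 l) : Prop := fil l p ⊆ fil l q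

/-- `G` is `(<c)`-directed with respect to `le`: `G` is nonempty and every subset of `G`
of cardinality `< c` has an upper bound in `G`. -/
def DirLtOn (l : Ordinal) (c : Cardinal.{1}) (G : Set (Q0 l))
    (le : Q0 l → Q0 l → Prop) : Prop :=
  G.Nonempty ∧ ∀ S : Set (Q0 l), S ⊆ G → #S < c → ∃ r ∈ G, ∀ p ∈ S, le p r

/-- The sum `⊕^e {d_x : x ∈ X}` of ultrafilters `d x` on `Z x` along an ultrafilter `e`
on `X`. -/
def ufSum (X : Set Ordinal) (e : Set (Set Ordinal)) (Z : Ordinal → Set Ordinal)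
    (d : Ordinal → Set (Set Ordinal)) : Set (Set Ordinal) :=
  {A | A ⊆ (⋃ x ∈ X, Z x) ∧ {x | x ∈ X ∧ Z x ∩ A ∈ d x} ∈ e}

/-- The function `f_p` associated with `p ∈ Q⁰_λ`: `f_p α` is the member of `C^p` with
`otp (C^p ∩ f_p α) = ω·α + ω`. -/
def fP (l : Ordinal) (p : Q0 l) (α : Ordinal) : Ordinal :=
  sInf {β | β ∈ p.C ∧ setOtp (p.C ∩ Iio β) = Ordinal.omega0 * α + Ordinal.omega0}

/-- The space `^λλ` (functions below `l` matter). -/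
def funSp (l : Ordinal) : Set (Ordinal → Ordinal) := {f | ∀ α, α < l → f α < l}

/-- `F` is a dominating family in `^λλ`. -/
def IsDominating (l : Ordinal) (F : Set (Ordinal → Ordinal)) : Prop :=
  ∀ g ∈ funSp l, ∃ f ∈ F, ∃ α, α < l ∧ ∀ β, α < β → β < l → g β < f β

/-- The dominating number `𝔡_λ`. -/
def dLam (l : Ordinal) : Cardinal.{1} :=
  sInf {c : Cardinal | ∃ F : Set (Ordinal → Ordinal),
    F ⊆ funSp l ∧ IsDominating l F ∧ #F = c}

/-- `S` is non-stationary in `λ`. -/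
def NonStatIn (S : Set Ordinal) (l : Ordinal) : Prop :=
  ∃ C, IsClubIn C l ∧ S ∩ C = ∅

/-- `F` is a club-dominating family in `^λλ`. -/
def IsClubDominating (l : Ordinal) (F : Set (Ordinal → Ordinal)) : Prop :=
  ∀ g ∈ funSp l, ∃ f ∈ F, NonStatIn {β | β < l ∧ f β ≤ g β} l

/-- The club-dominating number `𝔡_{cl(λ)}`. -/
def dClubLam (l : Ordinal) : Cardinal.{1} :=
  sInf {c : Cardinal | ∃ F : Set (Ordinal → Ordinal),
    F ⊆ funSp l ∧ IsClubDominating l F ∧ #F = c}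

/-- `A` is a nowhere dense subset of the space `^λλ` (with basic open sets determined
by initial segments). -/
def IsNwd (l : Ordinal) (A : Set (Ordinal → Ordinal)) : Prop :=
  A ⊆ funSp l ∧
  ∀ s ∈ funSp l, ∀ α, α < l → ∃ t ∈ funSp l, ∃ α', α ≤ α' ∧ α' < l ∧
    (∀ β, β < α → t β = s β) ∧ ∀ f ∈ funSp l, (∀ β, β < α' → f β = t β) → f ∉ A

/-- `A` belongs to the ideal `M^λ_{λ,λ}`, the `(<λ)`-complete ideal generated by the
nowhere dense subsets of `^λλ`. -/
def InMIdeal (l : Ordinal) (A : Set (Ordinal → Ordinal)) : Prop :=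
  A ⊆ funSp l ∧ ∃ θ, θ < l ∧ ∃ B : Ordinal → Set (Ordinal → Ordinal),
    (∀ i, i < θ → IsNwd l (B i)) ∧ A ⊆ ⋃ i ∈ Iio θ, B i

/-- The covering number `cov(M^λ_{λ,λ})`. -/
def covM (l : Ordinal) : Cardinal.{1} :=
  sInf {c : Cardinal | ∃ S : Set (Set (Ordinal → Ordinal)),
    (∀ A ∈ S, InMIdeal l A) ∧ funSp l ⊆ ⋃₀ S ∧ #S = c}

/-
Majorize `g` by a non-decreasing `f ∈ F_λ`. Weak reasonableness gives a club `C` with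
`A = ⋃_{δ ∈ C} [δ, δ + f δ) ∉ fil(G)`, so `λ \ A ∈ fil(p)` for some `p ∈ G`. For `δ` in the club
`C ∩ C^p` beyond the threshold of `p`, the block `Z^p_δ` meets `λ \ A`, which forces
`f δ ≤ δ + f δ < min (C^p \ (δ + 1)) ≤ f_p δ`. Hence `g < f_p` on a club.
-/

theorem setOtp_eq_of_orderIso {S : Set Ordinal} {o : Ordinal} (e : Iio o ≃o S) :
    setOtp S = o := by
  have hS : {o' : Ordinal | Nonempty (Iio o' ≃o S)} = {o} := by
    ext o'
    refine ⟨fun ⟨e'⟩ => ?_, fun h => h ▸ ⟨e⟩⟩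
    have := (e'.trans e.symm).toRelIsoLT.ordinalType_congr
    rwa [type_lt_Iio, type_lt_Iio, Ordinal.lift_inj] at this
  rw [setOtp, hS, csInf_singleton]

theorem IsUltraOn.nonempty_of_mem {Z A : Set Ordinal} {D : Set (Set Ordinal)}
    (hD : IsUltraOn Z D) (hA : A ∈ D) : A.Nonempty :=
  nonempty_iff_ne_empty.mpr fun h => hD.2.2.1 (h ▸ hA)

theorem iSup_Iio_lt_ord {κ : Cardinal} (hreg : κ.IsRegular) {i : Ordinal} (hi : i < κ.ord)
    {f : Ordinal → Ordinal} (hf : ∀ j < i, f j < κ.ord) : ⨆ j : Iio i, f j < κ.ord := by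
  refine Ordinal.lift_iSup_lt_of_lt_cof ?_ fun j => hf j j.2
  rw [Cardinal.mk_Iio_ordinal, Cardinal.lift_lift, ← Ordinal.lift_cof, hreg.cof_ord,
    Cardinal.lift_lt]
  exact Cardinal.lt_ord.mp hi

section Club

variable {C C' S : Set Ordinal} {l δ ε : Ordinal}

theorem IsClubIn.nxt_mem (hC : IsClubIn C l) {y : Ordinal} (hy : y < l) :
    nxt C y ∈ C ∩ Ioi y :=
  csInf_mem (hC.2.2 y hy)

theorem exists_mem_between_of_sSup_inter_Iio (h : sSup (S ∩ Iio δ) = δ) {b : Ordinal}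
    (hb : b < δ) : ∃ c ∈ S, b < c ∧ c < δ := by
  rw [← h] at hb
  obtain ⟨c, ⟨hcS, hcδ⟩, hbc⟩ := exists_lt_of_lt_csSup' hb
  exact ⟨c, hcS, hbc, hcδ⟩

theorem IsClubIn.mem_of_cofinal (hC : IsClubIn C l) (hδ : δ < l) (hδ0 : δ ≠ 0)
    (h : ∀ b < δ, ∃ c ∈ C, b < c ∧ c < δ) : δ ∈ C := by
  refine hC.2.1 δ hδ hδ0 (le_antisymm (csSup_le' fun c hc => hc.2.le) ?_)
  refine le_of_forall_lt fun b hb => ?_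
  obtain ⟨c, hcC, hbc, hcδ⟩ := h b hb
  exact hbc.trans_le (le_csSup ⟨δ, fun x hx => hx.2.le⟩ ⟨hcC, hcδ⟩)

theorem IsClubIn.mem_of_sSup_eq (hC : IsClubIn C l) (hS : S ⊆ C) (hδ : δ < l) (hδ0 : δ ≠ 0)
    (h : sSup (S ∩ Iio δ) = δ) : δ ∈ C :=
  hC.mem_of_cofinal hδ hδ0 fun _ hb =>
    let ⟨c, hcS, hc⟩ := exists_mem_between_of_sSup_inter_Iio h hb
    ⟨c, hS hcS, hc⟩

theorem IsClubIn.inter_Ioi (hC : IsClubIn C l) (hε : ε < l) : IsClubIn (C ∩ Ioi ε) l := by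
  refine ⟨fun c hc => hC.1 hc.1, fun δ hδ hδ0 h => ?_, fun α hα => ?_⟩
  · obtain ⟨c, hc, -, hcδ⟩ := exists_mem_between_of_sSup_inter_Iio h (pos_iff_ne_zero.mpr hδ0)
    exact ⟨hC.mem_of_sSup_eq inter_subset_left hδ hδ0 h, hc.2.trans hcδ⟩
  · obtain ⟨c, hcC, hc⟩ := hC.2.2 (max α ε) (max_lt hα hε)
    exact ⟨c, ⟨hcC, (le_max_right α ε).trans_lt hc⟩, (le_max_left α ε).trans_lt hc⟩

/-- Alternating between the next points of `C` and of `C'` `ω` times closes off at a common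
limit point, which stays below `l` because `cof l > ω`. -/
theorem IsClubIn.inter (hC : IsClubIn C l) (hC' : IsClubIn C' l) (hl : ℵ₀ < l.cof) :
    IsClubIn (C ∩ C') l := by
  refine ⟨fun c hc => hC.1 hc.1, fun δ hδ hδ0 h => ?_, fun α hα => ?_⟩
  · exact ⟨hC.mem_of_sSup_eq inter_subset_left hδ hδ0 h,
      hC'.mem_of_sSup_eq inter_subset_right hδ hδ0 h⟩
  set F : Ordinal → Ordinal := fun x => nxt C' (nxt C x)
  have hF : ∀ x < l, nxt C x ∈ C ∩ Ioi x ∧ F x ∈ C' ∩ Ioi (nxt C x) := fun x hx =>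
    ⟨hC.nxt_mem hx, hC'.nxt_mem (hC.1 (hC.nxt_mem hx).1)⟩
  have hFl : ∀ x < l, F x < l := fun x hx => hC'.1 (hF x hx).2.1
  have hiter : ∀ n, F^[n] α < l := fun n => by
    induction n with
    | zero => exact hα
    | succ n ih => rw [Function.iterate_succ_apply']; exact hFl _ ih
  set δ := Ordinal.nfp F α
  have hδl : δ < l := Ordinal.nfp_lt_ord hl hFl hα
  have hlt : ∀ n, nxt C (F^[n] α) < δ ∧ F^[n + 1] α < δ := fun n => by
    have h1 := hF _ (hiter n)
    have h2 := hF _ (hiter (n + 1))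
    rw [Function.iterate_succ_apply'] at h2 ⊢
    refine ⟨h1.2.2.trans_le ?_, h2.1.2.trans (h2.2.2.trans_le ?_)⟩
    · simpa only [Function.iterate_succ_apply'] using Ordinal.iterate_le_nfp F α (n + 1)
    · simpa only [Function.iterate_succ_apply'] using Ordinal.iterate_le_nfp F α (n + 2)
  have hcof : ∀ b < δ, (∃ c ∈ C, b < c ∧ c < δ) ∧ ∃ c ∈ C', b < c ∧ c < δ := fun b hb => by
    obtain ⟨n, hn⟩ := Ordinal.lt_nfp_iff.mp hb
    have h1 := hF _ (hiter n)
    refine ⟨⟨_, h1.1.1, hn.trans h1.1.2, (hlt n).1⟩, ⟨F^[n + 1] α, ?_, ?_, (hlt n).2⟩⟩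
    · rw [Function.iterate_succ_apply']; exact h1.2.1
    · rw [Function.iterate_succ_apply']; exact hn.trans (h1.1.2.trans h1.2.2)
  have hαδ : α < δ := (hF α hα).1.2.trans (hlt 0).1
  have hδ0 : δ ≠ 0 := (pos_of_gt hαδ).ne'
  exact ⟨δ, ⟨hC.mem_of_cofinal hδl hδ0 fun b hb => (hcof b hb).1,
    hC'.mem_of_cofinal hδl hδ0 fun b hb => (hcof b hb).2⟩, hαδ⟩

end Club

/-- The increasing enumeration of a club `C` of `l`; padding `C` with `[l, ∞)` makes it
unbounded, so that `enumOrd` applies, without changing it below `l`. -/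
def clubEnum (C : Set Ordinal) (l : Ordinal) : Ordinal → Ordinal := enumOrd (C ∪ Ici l)

section ClubEnum

variable {κ : Cardinal} {C : Set Ordinal} {l i : Ordinal}

theorem not_bddAbove_union_Ici (C : Set Ordinal) (l : Ordinal) : ¬ BddAbove (C ∪ Ici l) :=
  fun h => not_bddAbove_Ici l (h.mono subset_union_right)

theorem clubEnum_strictMono (C : Set Ordinal) (l : Ordinal) : StrictMono (clubEnum C l) :=
  enumOrd_strictMono (not_bddAbove_union_Ici C l)

theorem clubEnum_lt (hreg : κ.IsRegular) (hC : IsClubIn C κ.ord) (hi : i < κ.ord) :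
    clubEnum C κ.ord i < κ.ord := by
  induction i using WellFoundedLT.induction with
  | _ i ih =>
    obtain ⟨β, hβC, hβ⟩ := hC.2.2 _
      (iSup_Iio_lt_ord hreg hi fun j hj => ih j hj (hj.trans hi))
    refine (enumOrd_le_of_forall_lt (Or.inl hβC) fun j hj => ?_).trans_lt (hC.1 hβC)
    exact (Ordinal.le_iSup (fun j : Iio i => clubEnum C κ.ord j) ⟨j, hj⟩).trans_lt hβ

theorem clubEnum_mem (hreg : κ.IsRegular) (hC : IsClubIn C κ.ord) (hi : i < κ.ord) :
    clubEnum C κ.ord i ∈ C :=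
  (enumOrd_mem (not_bddAbove_union_Ici C _) i).resolve_right
    (not_le.mpr (clubEnum_lt hreg hC hi))

theorem exists_clubEnum_eq (hC : C ⊆ Iio l) {γ : Ordinal} (hγ : γ ∈ C) :
    ∃ i < l, clubEnum C l i = γ := by
  obtain ⟨i, rfl⟩ := enumOrd_surjective (not_bddAbove_union_Ici C l) (Or.inl hγ)
  exact ⟨i, (le_enumOrd_self (not_bddAbove_union_Ici C l)).trans_lt (hC hγ), rfl⟩

theorem inter_Iio_clubEnum (hreg : κ.IsRegular) (hC : IsClubIn C κ.ord) (hi : i < κ.ord) :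
    C ∩ Iio (clubEnum C κ.ord i) = clubEnum C κ.ord '' Iio i := by
  ext γ
  constructor
  · rintro ⟨hγC, hγ⟩
    obtain ⟨j, -, rfl⟩ := exists_clubEnum_eq hC.1 hγC
    exact ⟨j, (clubEnum_strictMono C _).lt_iff_lt.mp hγ, rfl⟩
  · rintro ⟨j, hj, rfl⟩
    exact ⟨clubEnum_mem hreg hC (hj.trans hi), clubEnum_strictMono C _ hj⟩

theorem setOtp_inter_Iio_clubEnum (hreg : κ.IsRegular) (hC : IsClubIn C κ.ord)
    (hi : i < κ.ord) : setOtp (C ∩ Iio (clubEnum C κ.ord i)) = i := by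
  rw [inter_Iio_clubEnum hreg hC hi]
  exact setOtp_eq_of_orderIso (StrictMonoOn.orderIso _ _ ((clubEnum_strictMono C _).strictMonoOn _))

end ClubEnum

section FP

variable {κ : Cardinal} {α : Ordinal}

theorem omega0_mul_add_omega0_lt_ord (hunc : ℵ₀ < κ) (hα : α < κ.ord) :
    ω * α + ω < κ.ord := by
  have hω : ω < κ.ord := Cardinal.omega0_lt_ord.mpr hunc
  exact Ordinal.isPrincipal_add_ord hunc.le (Ordinal.isPrincipal_mul_ord hunc.le hω hα) hω

theorem fP_eq_clubEnum (hreg : κ.IsRegular) (hunc : ℵ₀ < κ) (p : Q0 κ.ord) (hα : α < κ.ord) :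
    fP κ.ord p α = clubEnum p.C κ.ord (ω * α + ω) := by
  have hi := omega0_mul_add_omega0_lt_ord hunc hα
  suffices {β | β ∈ p.C ∧ setOtp (p.C ∩ Iio β) = ω * α + ω} = {clubEnum p.C κ.ord (ω * α + ω)} by
    rw [fP, this, csInf_singleton]
  ext β
  refine ⟨fun ⟨hβ, hotp⟩ => ?_, fun h => h ▸ ⟨clubEnum_mem hreg p.club hi,
    setOtp_inter_Iio_clubEnum hreg p.club hi⟩⟩
  obtain ⟨j, hj, rfl⟩ := exists_clubEnum_eq p.club.1 hβ
  rw [setOtp_inter_Iio_clubEnum hreg p.club hj] at hotp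
  rw [hotp, mem_singleton_iff]

theorem fP_mem (hreg : κ.IsRegular) (hunc : ℵ₀ < κ) (p : Q0 κ.ord) (hα : α < κ.ord) :
    fP κ.ord p α ∈ p.C := by
  rw [fP_eq_clubEnum hreg hunc p hα]
  exact clubEnum_mem hreg p.club (omega0_mul_add_omega0_lt_ord hunc hα)

theorem lt_fP (hreg : κ.IsRegular) (hunc : ℵ₀ < κ) (p : Q0 κ.ord) (hα : α < κ.ord) :
    α < fP κ.ord p α := by
  rw [fP_eq_clubEnum hreg hunc p hα]
  calc α ≤ ω * α := Ordinal.le_mul_right α omega0_pos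
    _ < ω * α + ω := lt_add_of_pos_right _ omega0_pos
    _ ≤ _ := le_enumOrd_self (not_bddAbove_union_Ici p.C κ.ord)

theorem nxt_le_fP (hreg : κ.IsRegular) (hunc : ℵ₀ < κ) (p : Q0 κ.ord) (hα : α < κ.ord) :
    nxt p.C α ≤ fP κ.ord p α :=
  csInf_le' ⟨fP_mem hreg hunc p hα, lt_fP hreg hunc p hα⟩

end FP

theorem exists_mem_Flam_ge {κ : Cardinal} (hreg : κ.IsRegular) {g : Ordinal → Ordinal}
    (hg : g ∈ funSp κ.ord) : ∃ f ∈ Flam κ.ord, ∀ β < κ.ord, g β ≤ f β := by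
  have hsucc : ∀ δ < κ.ord, Order.succ δ < κ.ord := fun δ hδ =>
    (Cardinal.isSuccLimit_ord hreg.aleph0_le).succ_lt hδ
  refine ⟨fun δ => (⨆ a : Iio (Order.succ δ), g a) + δ, ⟨fun δ hδ => ?_, fun a b hab _ => ?_,
    fun γ hγ => ⟨γ, hγ, le_add_self⟩⟩, fun β _ => ?_⟩
  · exact Ordinal.isPrincipal_add_ord hreg.aleph0_le
      (iSup_Iio_lt_ord hreg (hsucc δ hδ) fun j hj => hg j (hj.trans (hsucc δ hδ))) hδ
  · refine add_le_add (Ordinal.iSup_le fun j => ?_) hab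
    exact Ordinal.le_iSup (fun j : Iio (Order.succ b) => g j)
      ⟨j, j.2.trans_le (Order.succ_le_succ hab)⟩
  · exact (Ordinal.le_iSup (fun j : Iio (Order.succ β) => g j) ⟨β, Order.lt_succ β⟩).trans
      le_self_add

theorem exists_club_lt_fP {κ : Cardinal} (hreg : κ.IsRegular) (hunc : ℵ₀ < κ)
    {G : Set (Q0 κ.ord)} (hult : IsUltrafilterOn κ.ord (filG κ.ord G))
    (hwr : WeaklyReasonable κ.ord (filG κ.ord G)) {f : Ordinal → Ordinal} (hf : f ∈ Flam κ.ord) :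
    ∃ p ∈ G, ∃ E, IsClubIn E κ.ord ∧ ∀ β ∈ E, f β < fP κ.ord p β := by
  obtain ⟨C, hC, hAD⟩ := hwr f hf
  set A := ⋃ δ ∈ C, Ico δ (δ + f δ)
  have hA : A ⊆ Iio κ.ord := iUnion₂_subset fun δ hδ x hx =>
    hx.2.trans (Ordinal.isPrincipal_add_ord hreg.aleph0_le (hC.1 hδ) (hf.1 δ (hC.1 hδ)))
  have hAc : Iio κ.ord \ A ∈ filG κ.ord G := (hult.2.2.2.2.2 A hA).resolve_left hAD
  obtain ⟨p, hp, -, ε, hε, hB⟩ : ∃ p ∈ G, Iio κ.ord \ A ∈ fil κ.ord p := by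
    simpa only [filG, mem_iUnion, exists_prop] using hAc
  refine ⟨p, hp, C ∩ p.C ∩ Ioi ε, (hC.inter p.club ?_).inter_Ioi hε, ?_⟩
  · rwa [hreg.cof_ord]
  rintro β ⟨⟨hβC, hβp⟩, hεβ⟩
  obtain ⟨x, hxA, hx⟩ := (p.ultra β hβp).nonempty_of_mem (hB β hβp hεβ.le)
  have hfx : β + f β ≤ x := not_lt.mp fun h => hxA.2 (mem_biUnion hβC ⟨hx.1, h⟩)
  calc f β ≤ β + f β := le_add_self
    _ < nxt p.C β := hfx.trans_lt hx.2
    _ ≤ fP κ.ord p β := nxt_le_fP hreg hunc p (p.club.1 hβp)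

theorem stmt18_general (κ : Cardinal) (hreg : κ.IsRegular) (hunc : ℵ₀ < κ)
    (G : Set (Q0 κ.ord))
    (hult : IsUltrafilterOn κ.ord (filG κ.ord G))
    (hwr : WeaklyReasonable κ.ord (filG κ.ord G)) :
    {f | ∃ p ∈ G, f = fP κ.ord p} ⊆ funSp κ.ord ∧
    IsClubDominating κ.ord {f | ∃ p ∈ G, f = fP κ.ord p} ∧
    dClubLam κ.ord ≤ #G := by
  have hfun : {f | ∃ p ∈ G, f = fP κ.ord p} ⊆ funSp κ.ord := by
    rintro _ ⟨p, -, rfl⟩ α hα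
    exact p.club.1 (fP_mem hreg hunc p hα)
  have hdom : IsClubDominating κ.ord {f | ∃ p ∈ G, f = fP κ.ord p} := by
    intro g hg
    obtain ⟨f, hf, hgf⟩ := exists_mem_Flam_ge hreg hg
    obtain ⟨p, hp, E, hE, hfE⟩ := exists_club_lt_fP hreg hunc hult hwr hf
    refine ⟨fP κ.ord p, ⟨p, hp, rfl⟩, E, hE, eq_empty_of_forall_notMem ?_⟩
    rintro β ⟨⟨hβ, hle⟩, hβE⟩
    exact (hle.trans (hgf β hβ)).not_gt (hfE β hβE)
  refine ⟨hfun, hdom, ?_⟩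
  have himage : {f | ∃ p ∈ G, f = fP κ.ord p} ⊆ fP κ.ord '' G := by
    rintro _ ⟨p, hp, rfl⟩
    exact ⟨p, hp, rfl⟩
  calc dClubLam κ.ord ≤ #{f | ∃ p ∈ G, f = fP κ.ord p} := csInf_le' ⟨_, hfun, hdom, rfl⟩
    _ ≤ #G := (Cardinal.mk_le_mk_of_subset himage).trans Cardinal.mk_image_le

/-- Theorem 3.1(2): if `G*₁ ⊆ Q⁰_λ` is `≤⁰`-directed and `fil(G*₁)` is a weakly
reasonable (uniform) ultrafilter on `λ`, then `{f_p : p ∈ G*₁}` is a club-dominating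
family in `^λλ`; in particular `|G*₁| ≥ 𝔡_{cl(λ)}`. -/
theorem stmt18 (κ : Cardinal) (hreg : κ.IsRegular) (hunc : ℵ₀ < κ)
    (G : Set (Q0 κ.ord))
    (hdir : DirLtOn κ.ord ℵ₀ G (le0 κ.ord))
    (hult : IsUltrafilterOn κ.ord (filG κ.ord G))
    (huni : IsUniformOn κ.ord (filG κ.ord G))
    (hwr : WeaklyReasonable κ.ord (filG κ.ord G)) :
    {f | ∃ p ∈ G, f = fP κ.ord p} ⊆ funSp κ.ord ∧
    IsClubDominating κ.ord {f | ∃ p ∈ G, f = fP κ.ord p} ∧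
    dClubLam κ.ord ≤ #G :=
  stmt18_general κ hreg hunc G hult hwr

end Sh830

end
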